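/- arXiv:2402.10418 — 2 statements merged into one kernel-verified Lean document; each statement's English description precedes it below -/
import Mathlib

section
/- Let X₁,…,Xₙ be i.i.d. real random variables with finite fourth moment and X̄ₙ the sample mean. Then E[X̄ₙ · ∑ᵢ(Xᵢ − X̄ₙ)³] = E[X]·m₃·n⁻¹(n−1)(n−2) + n⁻²(n−1)(n−2)(m₄ − 3m₂²), where m_k = E[(X − E[X])^k] denotes the k-th central moment. -/
open MeasureTheory ProbabilityTheory

-- auxiliary: (a+b)^4 bound
lemma aux_abs_pow4 (x c : ℝ) : |(x - c) ^ 4| ≤ 8 * |x| ^ 4 + 8 * |c| ^ 4 := by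
  have h1 : |(x - c) ^ 4| = |x - c| ^ 4 := by rw [abs_pow]
  have h2 : |x - c| ≤ |x| + |c| := abs_sub x c
  have h3 : |x - c| ^ 4 ≤ (|x| + |c|) ^ 4 := by
    apply pow_le_pow_left₀ (abs_nonneg _) h2
  rw [h1]
  refine h3.trans ?_
  nlinarith [abs_nonneg x, abs_nonneg c, sq_nonneg (|x| - |c|), sq_nonneg (|x| + |c|),
    sq_nonneg (|x|^2 - |c|^2), mul_nonneg (abs_nonneg x) (abs_nonneg c),
    sq_nonneg (|x| * |c|), sq_nonneg (|x|^2 + |c|^2 - 2 * |x| * |c|)]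

lemma aux_pow_le (y : ℝ) {k : ℕ} (hk : k ≤ 4) : |y ^ k| ≤ 1 + y ^ 4 := by
  rw [abs_pow]
  have h4 : y ^ 4 = |y| ^ 4 := by rw [← abs_pow]; rw [abs_of_nonneg (by positivity)]
  rw [h4]
  rcases le_total |y| 1 with h | h
  · have : |y| ^ k ≤ 1 := pow_le_one₀ (abs_nonneg y) h
    nlinarith [pow_nonneg (abs_nonneg y) 4]
  · have : |y| ^ k ≤ |y| ^ 4 := pow_le_pow_right₀ h hk
    nlinarith

set_option maxHeartbeats 1000000 in
/-- For i.i.d. real random variables with finite fourth moment,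
`E[X̄ₙ·∑ᵢ(Xᵢ − X̄ₙ)³] = E[X]·m₃·n⁻¹(n−1)(n−2) + n⁻²(n−1)(n−2)(m₄ − 3m₂²)`,
where `m_k` is the k-th central moment. -/
theorem sample_mean_times_sum_centered_cube_expectation
    {Ω : Type*} [MeasurableSpace Ω] (μ : Measure Ω) [IsProbabilityMeasure μ]
    (n : ℕ) (hn : 0 < n) (X : Fin n → Ω → ℝ)
    (hmeas : ∀ i, Measurable (X i))
    (hindep : iIndepFun X μ)
    (hident : ∀ i, μ.map (X i) = μ.map (X ⟨0, hn⟩))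
    (hmom : Integrable (fun ω => |X ⟨0, hn⟩ ω| ^ 4) μ)
    (m2 m3 m4 : ℝ)
    (hm2 : m2 = ∫ ω, (X ⟨0, hn⟩ ω - ∫ ω', X ⟨0, hn⟩ ω' ∂μ) ^ 2 ∂μ)
    (hm3 : m3 = ∫ ω, (X ⟨0, hn⟩ ω - ∫ ω', X ⟨0, hn⟩ ω' ∂μ) ^ 3 ∂μ)
    (hm4 : m4 = ∫ ω, (X ⟨0, hn⟩ ω - ∫ ω', X ⟨0, hn⟩ ω' ∂μ) ^ 4 ∂μ) :
    ∫ ω, ((n : ℝ)⁻¹ * ∑ j, X j ω) * ∑ i, (X i ω - (n : ℝ)⁻¹ * ∑ j, X j ω) ^ 3 ∂μ =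
      (∫ ω, X ⟨0, hn⟩ ω ∂μ) * m3 * (n : ℝ)⁻¹ * ((n : ℝ) - 1) * ((n : ℝ) - 2)
      + (n : ℝ)⁻¹ ^ 2 * ((n : ℝ) - 1) * ((n : ℝ) - 2) * (m4 - 3 * m2 ^ 2) := by
  have hne : (n : ℝ) ≠ 0 := Nat.cast_ne_zero.mpr hn.ne'
  set c : ℝ := ∫ ω, X ⟨0, hn⟩ ω ∂μ with hc
  set Y : Fin n → Ω → ℝ := fun i ω => X i ω - c with hYdef
  -- measurability
  have hYmeas : ∀ i, Measurable (Y i) := fun i => (hmeas i).sub measurable_const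
  -- independence of the centered family
  have hYindep : iIndepFun Y μ := by
    have := hindep.comp (fun _ => fun x : ℝ => x - c)
      (fun _ => measurable_id.sub measurable_const)
    exact this
  -- identical moments
  have hmom_eq : ∀ (i : Fin n) (k : ℕ),
      ∫ ω, Y i ω ^ k ∂μ = ∫ ω, Y ⟨0, hn⟩ ω ^ k ∂μ := by
    intro i k
    have hg : Measurable (fun x : ℝ => (x - c) ^ k) :=
      (measurable_id.sub measurable_const).pow_const k
    have h1 : ∫ ω, Y i ω ^ k ∂μ = ∫ x, (x - c) ^ k ∂(μ.map (X i)) := by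
      rw [integral_map (hmeas i).aemeasurable hg.aestronglyMeasurable]
    have h2 : ∫ ω, Y ⟨0, hn⟩ ω ^ k ∂μ = ∫ x, (x - c) ^ k ∂(μ.map (X ⟨0, hn⟩)) := by
      rw [integral_map (hmeas _).aemeasurable hg.aestronglyMeasurable]
    rw [h1, h2, hident i]
  -- integrability of |X i|^4
  have hmom_i : ∀ i, Integrable (fun ω => |X i ω| ^ 4) μ := by
    intro i
    have hg : Measurable (fun x : ℝ => |x| ^ 4) := measurable_abs.pow_const 4
    have h1 : Integrable (fun x : ℝ => |x| ^ 4) (μ.map (X i)) := by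
      rw [hident i]
      rw [integrable_map_measure hg.aestronglyMeasurable (hmeas _).aemeasurable]
      exact hmom
    rw [integrable_map_measure hg.aestronglyMeasurable (hmeas i).aemeasurable] at h1
    exact h1
  -- integrability of Y i ^ 4
  have hY4 : ∀ i, Integrable (fun ω => Y i ω ^ 4) μ := by
    intro i
    refine Integrable.mono' (((hmom_i i).const_mul 8).add (integrable_const (8 * |c| ^ 4)))
      ((hYmeas i).pow_const 4).aestronglyMeasurable ?_
    filter_upwards with ω
    simpa using aux_abs_pow4 (X i ω) c
  -- integrability of Y i ^ k for k ≤ 4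
  have hYk : ∀ (i : Fin n) (k : ℕ), k ≤ 4 → Integrable (fun ω => Y i ω ^ k) μ := by
    intro i k hk
    refine Integrable.mono' ((integrable_const 1).add (hY4 i))
      ((hYmeas i).pow_const k).aestronglyMeasurable ?_
    filter_upwards with ω
    simpa using aux_pow_le (Y i ω) hk
  -- integrability of X 0, and first moment of Y is 0
  have hXint : ∀ i, Integrable (X i) μ := by
    intro i
    have : Integrable (Y i) μ := by simpa using hYk i 1 (by norm_num)
    have h2 : Integrable (fun ω => Y i ω + c) μ := this.add (integrable_const c)
    simpa [hYdef] using h2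
  have hM1 : ∀ i, ∫ ω, Y i ω ∂μ = 0 := by
    intro i
    have h := hmom_eq i 1
    simp only [pow_one] at h
    rw [h, hYdef]
    rw [integral_sub (hXint _) (integrable_const c)]
    simp [hc]
  -- the moments of Y
  have hM2 : ∀ i, ∫ ω, Y i ω ^ 2 ∂μ = m2 := fun i => by rw [hmom_eq i 2, hm2]
  have hM3 : ∀ i, ∫ ω, Y i ω ^ 3 ∂μ = m3 := fun i => by rw [hmom_eq i 3, hm3]
  have hM4 : ∀ i, ∫ ω, Y i ω ^ 4 ∂μ = m4 := fun i => by rw [hmom_eq i 4, hm4]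
  -- the leave-one-out sums
  set U : Fin n → Ω → ℝ := fun i ω => ∑ j ∈ Finset.univ.erase i, Y j ω with hUdef
  have hUmeas : ∀ i, Measurable (U i) :=
    fun i => Finset.measurable_sum _ (fun j _ => hYmeas j)
  have hUfun : ∀ i, U i = ∑ j ∈ Finset.univ.erase i, Y j := by
    intro i; funext ω; simp [hUdef, Finset.sum_apply]
  -- independence of Y i and U i
  have hYU : ∀ i, IndepFun (Y i) (U i) μ := by
    intro i
    have h := (hYindep.indepFun_finsetSum_of_notMem hYmeas
      (Finset.notMem_erase i Finset.univ)).symm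
    rwa [← hUfun i] at h
  have hYUpow : ∀ (i : Fin n) (a b : ℕ),
      IndepFun (fun ω => Y i ω ^ a) (fun ω => U i ω ^ b) μ :=
    fun i a b => (hYU i).comp (measurable_id.pow_const a) (measurable_id.pow_const b)
  -- integrability of U i ^ 4 (and lower powers)
  have hsum4 : ∀ s : Finset (Fin n), Integrable (fun ω => (∑ j ∈ s, Y j ω) ^ 4) μ := by
    intro s
    induction s using Finset.induction with
    | empty => simp
    | @insert a s ha ih =>
      have hms : Measurable (fun ω => ∑ j ∈ s, Y j ω) :=
        Finset.measurable_sum _ (fun j _ => hYmeas j)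
      simp only [Finset.sum_insert ha]
      refine Integrable.mono' (((hY4 a).const_mul 8).add (ih.const_mul 8))
        (((hYmeas a).add hms).pow_const 4).aestronglyMeasurable ?_
      filter_upwards with ω
      have habs4 : ∀ z : ℝ, |z| ^ 4 = z ^ 4 := fun z => by
        rw [pow_abs, abs_of_nonneg (by positivity)]
      have h := aux_abs_pow4 (Y a ω) (-(∑ j ∈ s, Y j ω))
      rw [sub_neg_eq_add, abs_neg, habs4, habs4] at h
      simpa [Real.norm_eq_abs] using h
  have hU4 : ∀ i, Integrable (fun ω => U i ω ^ 4) μ := fun i => hsum4 _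
  have hUk : ∀ (i : Fin n) (k : ℕ), k ≤ 4 → Integrable (fun ω => U i ω ^ k) μ := by
    intro i k hk
    refine Integrable.mono' ((integrable_const 1).add (hU4 i))
      ((hUmeas i).pow_const k).aestronglyMeasurable ?_
    filter_upwards with ω
    simpa using aux_pow_le (U i ω) hk
  -- first and second moments of U
  have hUM1 : ∀ i, ∫ ω, U i ω ∂μ = 0 := by
    intro i
    rw [hUdef]
    rw [integral_finset_sum _ (fun j _ => by simpa using hYk j 1 (by norm_num))]
    simp [hM1]
  have hUM2 : ∀ i, ∫ ω, U i ω ^ 2 ∂μ = ((n : ℝ) - 1) * m2 := by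
    intro i
    have hexp : ∀ ω, U i ω ^ 2 =
        ∑ j ∈ Finset.univ.erase i, ∑ k ∈ Finset.univ.erase i, Y j ω * Y k ω := by
      intro ω
      rw [hUdef]
      simp only [Finset.sum_mul_sum, pow_two]
    rw [integral_congr_ae (ae_of_all _ hexp)]
    have hint2 : ∀ (j k : Fin n), Integrable (fun ω => Y j ω * Y k ω) μ := by
      intro j k
      rcases eq_or_ne j k with rfl | hjk
      · have := hYk j 2 (by norm_num)
        simpa [pow_two] using this
      · have h1 := hYk j 1 (by norm_num)
        have h2 := hYk k 1 (by norm_num)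
        simp only [pow_one] at h1 h2
        exact (hYindep.indepFun hjk).integrable_mul h1 h2
    have hval : ∀ (j k : Fin n), ∫ ω, Y j ω * Y k ω ∂μ = if j = k then m2 else 0 := by
      intro j k
      rcases eq_or_ne j k with rfl | hjk
      · simp only [if_pos rfl]
        rw [← hM2 j]
        congr 1; funext ω; ring
      · rw [if_neg hjk]
        have h := (hYindep.indepFun hjk).integral_mul_eq_mul_integral (hYmeas j).aestronglyMeasurable
          (hYmeas k).aestronglyMeasurable
        simpa [Pi.mul_apply, hM1 j] using h
    rw [integral_finset_sum _ (fun j _ => integrable_finset_sum _ (fun k _ => hint2 j k))]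
    have : ∀ j ∈ Finset.univ.erase i,
        (∫ ω, ∑ k ∈ Finset.univ.erase i, Y j ω * Y k ω ∂μ) = m2 := by
      intro j hj
      rw [integral_finset_sum _ (fun k _ => hint2 j k)]
      rw [Finset.sum_congr rfl (fun k _ => hval j k)]
      rw [Finset.sum_ite_eq (Finset.univ.erase i) j (fun _ => m2)]
      simp [hj]
    rw [Finset.sum_congr rfl this, Finset.sum_const]
    rw [Finset.card_erase_of_mem (Finset.mem_univ i), Finset.card_univ, Fintype.card_fin]
    rw [nsmul_eq_mul]
    rw [Nat.cast_sub hn]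
    norm_num
  -- integrability and value of mixed monomials
  have hmono_int : ∀ (i : Fin n) (a b : ℕ), a ≤ 4 → b ≤ 4 →
      Integrable (fun ω => Y i ω ^ a * U i ω ^ b) μ := by
    intro i a b ha hb
    have h := (hYUpow i a b).integrable_mul (hYk i a ha) (hUk i b hb)
    exact h
  have hmono_val : ∀ (i : Fin n) (a b : ℕ),
      ∫ ω, Y i ω ^ a * U i ω ^ b ∂μ = (∫ ω, Y i ω ^ a ∂μ) * (∫ ω, U i ω ^ b ∂μ) := by
    intro i a b
    have h := (hYUpow i a b).integral_mul_eq_mul_integral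
      ((hYmeas i).pow_const a).aestronglyMeasurable
      ((hUmeas i).pow_const b).aestronglyMeasurable
    simpa [Pi.mul_apply] using h
  have hM1' : ∀ i, ∫ ω, Y i ω ^ 1 ∂μ = 0 := by
    intro i; simp only [pow_one]; exact hM1 i
  have hUM1' : ∀ i, ∫ ω, U i ω ^ 1 ∂μ = 0 := by
    intro i; simp only [pow_one]; exact hUM1 i
  -- the per-index expansion
  set F : Fin n → Ω → ℝ := fun i ω =>
    (c - 3 * c * (n : ℝ)⁻¹ + 2 * c * (n : ℝ)⁻¹ ^ 2) * Y i ω ^ 3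
    + (-3 * c * (n : ℝ)⁻¹ + 4 * c * (n : ℝ)⁻¹ ^ 2) * (Y i ω ^ 2 * U i ω ^ 1)
    + (2 * c * (n : ℝ)⁻¹ ^ 2) * (Y i ω ^ 1 * U i ω ^ 2)
    + ((n : ℝ)⁻¹ - 3 * (n : ℝ)⁻¹ ^ 2 + 2 * (n : ℝ)⁻¹ ^ 3) * Y i ω ^ 4
    + ((n : ℝ)⁻¹ - 6 * (n : ℝ)⁻¹ ^ 2 + 6 * (n : ℝ)⁻¹ ^ 3) * (Y i ω ^ 3 * U i ω ^ 1)
    + (-3 * (n : ℝ)⁻¹ ^ 2 + 6 * (n : ℝ)⁻¹ ^ 3) * (Y i ω ^ 2 * U i ω ^ 2)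
    + (2 * (n : ℝ)⁻¹ ^ 3) * (Y i ω ^ 1 * U i ω ^ 3) with hFdef
  have h1 : ∀ i, Integrable (fun ω =>
      (c - 3 * c * (n : ℝ)⁻¹ + 2 * c * (n : ℝ)⁻¹ ^ 2) * Y i ω ^ 3) μ :=
    fun i => (hYk i 3 (by norm_num)).const_mul _
  have h2 : ∀ i, Integrable (fun ω =>
      (-3 * c * (n : ℝ)⁻¹ + 4 * c * (n : ℝ)⁻¹ ^ 2) * (Y i ω ^ 2 * U i ω ^ 1)) μ :=
    fun i => (hmono_int i 2 1 (by norm_num) (by norm_num)).const_mul _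
  have h3 : ∀ i, Integrable (fun ω =>
      (2 * c * (n : ℝ)⁻¹ ^ 2) * (Y i ω ^ 1 * U i ω ^ 2)) μ :=
    fun i => (hmono_int i 1 2 (by norm_num) (by norm_num)).const_mul _
  have h4 : ∀ i, Integrable (fun ω =>
      ((n : ℝ)⁻¹ - 3 * (n : ℝ)⁻¹ ^ 2 + 2 * (n : ℝ)⁻¹ ^ 3) * Y i ω ^ 4) μ :=
    fun i => (hYk i 4 (by norm_num)).const_mul _
  have h5 : ∀ i, Integrable (fun ω =>
      ((n : ℝ)⁻¹ - 6 * (n : ℝ)⁻¹ ^ 2 + 6 * (n : ℝ)⁻¹ ^ 3) * (Y i ω ^ 3 * U i ω ^ 1)) μ :=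
    fun i => (hmono_int i 3 1 (by norm_num) (by norm_num)).const_mul _
  have h6 : ∀ i, Integrable (fun ω =>
      (-3 * (n : ℝ)⁻¹ ^ 2 + 6 * (n : ℝ)⁻¹ ^ 3) * (Y i ω ^ 2 * U i ω ^ 2)) μ :=
    fun i => (hmono_int i 2 2 (by norm_num) (by norm_num)).const_mul _
  have h7 : ∀ i, Integrable (fun ω =>
      (2 * (n : ℝ)⁻¹ ^ 3) * (Y i ω ^ 1 * U i ω ^ 3)) μ :=
    fun i => (hmono_int i 1 3 (by norm_num) (by norm_num)).const_mul _
  have hFint : ∀ i, Integrable (F i) μ := by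
    intro i
    exact ((((((h1 i).add (h2 i)).add (h3 i)).add (h4 i)).add (h5 i)).add (h6 i)).add (h7 i)
  have hFval : ∀ i, ∫ ω, F i ω ∂μ =
      (c - 3 * c * (n : ℝ)⁻¹ + 2 * c * (n : ℝ)⁻¹ ^ 2) * m3
      + ((n : ℝ)⁻¹ - 3 * (n : ℝ)⁻¹ ^ 2 + 2 * (n : ℝ)⁻¹ ^ 3) * m4
      + (-3 * (n : ℝ)⁻¹ ^ 2 + 6 * (n : ℝ)⁻¹ ^ 3) * (m2 * (((n : ℝ) - 1) * m2)) := by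
    intro i
    rw [hFdef]
    have I2 : Integrable (fun ω => (c - 3 * c * (n : ℝ)⁻¹ + 2 * c * (n : ℝ)⁻¹ ^ 2) * Y i ω ^ 3
      + (-3 * c * (n : ℝ)⁻¹ + 4 * c * (n : ℝ)⁻¹ ^ 2) * (Y i ω ^ 2 * U i ω ^ 1)) μ := by
      exact ((h1 i).add (h2 i))
    have I3 : Integrable (fun ω => (c - 3 * c * (n : ℝ)⁻¹ + 2 * c * (n : ℝ)⁻¹ ^ 2) * Y i ω ^ 3
      + (-3 * c * (n : ℝ)⁻¹ + 4 * c * (n : ℝ)⁻¹ ^ 2) * (Y i ω ^ 2 * U i ω ^ 1)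
      + (2 * c * (n : ℝ)⁻¹ ^ 2) * (Y i ω ^ 1 * U i ω ^ 2)) μ := by
      exact (((h1 i).add (h2 i)).add (h3 i))
    have I4 : Integrable (fun ω => (c - 3 * c * (n : ℝ)⁻¹ + 2 * c * (n : ℝ)⁻¹ ^ 2) * Y i ω ^ 3
      + (-3 * c * (n : ℝ)⁻¹ + 4 * c * (n : ℝ)⁻¹ ^ 2) * (Y i ω ^ 2 * U i ω ^ 1)
      + (2 * c * (n : ℝ)⁻¹ ^ 2) * (Y i ω ^ 1 * U i ω ^ 2)
      + ((n : ℝ)⁻¹ - 3 * (n : ℝ)⁻¹ ^ 2 + 2 * (n : ℝ)⁻¹ ^ 3) * Y i ω ^ 4) μ := by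
      exact ((((h1 i).add (h2 i)).add (h3 i)).add (h4 i))
    have I5 : Integrable (fun ω => (c - 3 * c * (n : ℝ)⁻¹ + 2 * c * (n : ℝ)⁻¹ ^ 2) * Y i ω ^ 3
      + (-3 * c * (n : ℝ)⁻¹ + 4 * c * (n : ℝ)⁻¹ ^ 2) * (Y i ω ^ 2 * U i ω ^ 1)
      + (2 * c * (n : ℝ)⁻¹ ^ 2) * (Y i ω ^ 1 * U i ω ^ 2)
      + ((n : ℝ)⁻¹ - 3 * (n : ℝ)⁻¹ ^ 2 + 2 * (n : ℝ)⁻¹ ^ 3) * Y i ω ^ 4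
      + ((n : ℝ)⁻¹ - 6 * (n : ℝ)⁻¹ ^ 2 + 6 * (n : ℝ)⁻¹ ^ 3) * (Y i ω ^ 3 * U i ω ^ 1)) μ := by
      exact (((((h1 i).add (h2 i)).add (h3 i)).add (h4 i)).add (h5 i))
    have I6 : Integrable (fun ω => (c - 3 * c * (n : ℝ)⁻¹ + 2 * c * (n : ℝ)⁻¹ ^ 2) * Y i ω ^ 3
      + (-3 * c * (n : ℝ)⁻¹ + 4 * c * (n : ℝ)⁻¹ ^ 2) * (Y i ω ^ 2 * U i ω ^ 1)
      + (2 * c * (n : ℝ)⁻¹ ^ 2) * (Y i ω ^ 1 * U i ω ^ 2)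
      + ((n : ℝ)⁻¹ - 3 * (n : ℝ)⁻¹ ^ 2 + 2 * (n : ℝ)⁻¹ ^ 3) * Y i ω ^ 4
      + ((n : ℝ)⁻¹ - 6 * (n : ℝ)⁻¹ ^ 2 + 6 * (n : ℝ)⁻¹ ^ 3) * (Y i ω ^ 3 * U i ω ^ 1)
      + (-3 * (n : ℝ)⁻¹ ^ 2 + 6 * (n : ℝ)⁻¹ ^ 3) * (Y i ω ^ 2 * U i ω ^ 2)) μ := by
      exact ((((((h1 i).add (h2 i)).add (h3 i)).add (h4 i)).add (h5 i)).add (h6 i))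
    rw [integral_add I6 (h7 i), integral_add I5 (h6 i), integral_add I4 (h5 i),
      integral_add I3 (h4 i), integral_add I2 (h3 i), integral_add (h1 i) (h2 i)]
    rw [integral_const_mul, integral_const_mul, integral_const_mul, integral_const_mul,
      integral_const_mul, integral_const_mul, integral_const_mul]
    rw [hmono_val i 2 1, hmono_val i 1 2, hmono_val i 3 1, hmono_val i 2 2, hmono_val i 1 3]
    rw [hM3 i, hM4 i, hM1' i, hM2 i, hUM1' i, hUM2 i]
    ring
  -- generic distribution of sums of polynomials in Y i
  have hdist : ∀ (p0 p1 p2 p3 p4 : ℝ) (ω : Ω),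
      ∑ i, (p0 + p1 * Y i ω + p2 * Y i ω ^ 2 + p3 * Y i ω ^ 3 + p4 * Y i ω ^ 4)
        = (n : ℝ) * p0 + p1 * (∑ i, Y i ω) + p2 * (∑ i, Y i ω ^ 2)
          + p3 * (∑ i, Y i ω ^ 3) + p4 * (∑ i, Y i ω ^ 4) := by
    intro p0 p1 p2 p3 p4 ω
    simp only [Finset.sum_add_distrib, Finset.sum_const, Finset.card_univ, Fintype.card_fin,
      nsmul_eq_mul, ← Finset.mul_sum]
  -- pointwise identity
  have claimA : ∀ ω : Ω,
      ((n : ℝ)⁻¹ * ∑ j, X j ω) * ∑ i, (X i ω - (n : ℝ)⁻¹ * ∑ j, X j ω) ^ 3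
        = ∑ i, F i ω := by
    intro ω
    have hXj : ∀ j, X j ω = Y j ω + c := fun j => by simp [hYdef]
    have hsumX : ∑ j, X j ω = (∑ j, Y j ω) + (n : ℝ) * c := by
      rw [Finset.sum_congr rfl (fun j _ => hXj j), Finset.sum_add_distrib]
      simp [Finset.card_univ]
    have hmean : (n : ℝ)⁻¹ * ∑ j, X j ω = c + (n : ℝ)⁻¹ * (∑ j, Y j ω) := by
      rw [hsumX]
      field_simp
      ring
    rw [hmean]
    have hinner : ∀ i, (X i ω - (c + (n : ℝ)⁻¹ * (∑ j, Y j ω))) ^ 3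
        = (-(((n : ℝ)⁻¹ * (∑ j, Y j ω)) ^ 3))
          + (3 * ((n : ℝ)⁻¹ * (∑ j, Y j ω)) ^ 2) * Y i ω
          + (-(3 * ((n : ℝ)⁻¹ * (∑ j, Y j ω)))) * Y i ω ^ 2
          + 1 * Y i ω ^ 3 + 0 * Y i ω ^ 4 := by
      intro i; rw [hXj i]; ring
    rw [Finset.sum_congr rfl (fun i _ => hinner i), hdist]
    have hU' : ∀ i, U i ω = (∑ j, Y j ω) - Y i ω := by
      intro i
      rw [hUdef]
      exact Finset.sum_erase_eq_sub (Finset.mem_univ i)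
    have hF : ∀ i, F i ω =
        0
        + ((2 * c * (n : ℝ)⁻¹ ^ 2) * (∑ j, Y j ω) ^ 2
            + (2 * (n : ℝ)⁻¹ ^ 3) * (∑ j, Y j ω) ^ 3) * Y i ω
        + ((-3 * c * (n : ℝ)⁻¹ + 4 * c * (n : ℝ)⁻¹ ^ 2) * (∑ j, Y j ω)
            - 2 * (2 * c * (n : ℝ)⁻¹ ^ 2) * (∑ j, Y j ω)
            + (-3 * (n : ℝ)⁻¹ ^ 2 + 6 * (n : ℝ)⁻¹ ^ 3) * (∑ j, Y j ω) ^ 2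
            - 3 * (2 * (n : ℝ)⁻¹ ^ 3) * (∑ j, Y j ω) ^ 2) * Y i ω ^ 2
        + ((c - 3 * c * (n : ℝ)⁻¹ + 2 * c * (n : ℝ)⁻¹ ^ 2)
            - (-3 * c * (n : ℝ)⁻¹ + 4 * c * (n : ℝ)⁻¹ ^ 2)
            + (2 * c * (n : ℝ)⁻¹ ^ 2)
            + ((n : ℝ)⁻¹ - 6 * (n : ℝ)⁻¹ ^ 2 + 6 * (n : ℝ)⁻¹ ^ 3) * (∑ j, Y j ω)
            - 2 * (-3 * (n : ℝ)⁻¹ ^ 2 + 6 * (n : ℝ)⁻¹ ^ 3) * (∑ j, Y j ω)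
            + 3 * (2 * (n : ℝ)⁻¹ ^ 3) * (∑ j, Y j ω)) * Y i ω ^ 3
        + (((n : ℝ)⁻¹ - 3 * (n : ℝ)⁻¹ ^ 2 + 2 * (n : ℝ)⁻¹ ^ 3)
            - ((n : ℝ)⁻¹ - 6 * (n : ℝ)⁻¹ ^ 2 + 6 * (n : ℝ)⁻¹ ^ 3)
            + (-3 * (n : ℝ)⁻¹ ^ 2 + 6 * (n : ℝ)⁻¹ ^ 3)
            - (2 * (n : ℝ)⁻¹ ^ 3)) * Y i ω ^ 4 := by
      intro i
      rw [hFdef]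
      simp only
      rw [hU' i]
      ring
    rw [Finset.sum_congr rfl (fun i _ => hF i), hdist]
    have hrw : (n : ℝ) * (-(((n : ℝ)⁻¹ * (∑ j, Y j ω)) ^ 3))
        = -((n : ℝ)⁻¹ ^ 2 * (∑ j, Y j ω) ^ 3) := by
      field_simp
    rw [hrw, mul_zero, zero_add]
    ring
  -- assemble
  rw [integral_congr_ae (ae_of_all μ claimA)]
  rw [integral_finset_sum _ (fun i _ => hFint i)]
  rw [Finset.sum_congr rfl (fun i _ => hFval i), Finset.sum_const, Finset.card_univ,
    Fintype.card_fin, nsmul_eq_mul]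
  field_simp
  ring
end

section
/- Let Z be a real random variable in L²(μ) and λ ≥ 0. Then E_μ[Z] + λ(Var_μ Z)^{1/2} = sup{ E_μ[ξZ] : ξ ∈ L²(μ), E_μ[ξ] = 1, E_μ[(ξ − 1)²] ≤ λ² }, i.e. the mean-deviation risk measure of order 2 equals the supremum of reweighted expectations over the χ²-ball of radius λ² centered at μ. -/
open MeasureTheory ProbabilityTheory

private lemma aux_integrable_mul {Ω : Type*} [MeasurableSpace Ω] {μ : Measure Ω}
    {f g : Ω → ℝ} (hf : MemLp f 2 μ) (hg : MemLp g 2 μ) :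
    Integrable (fun ω => f ω * g ω) μ := by
  have h := (((hf.add hg).integrable_sq.sub hf.integrable_sq).sub hg.integrable_sq).div_const 2
  have heq : (fun ω => f ω * g ω)
      = fun ω => (((f ω + g ω) ^ 2 - f ω ^ 2) - g ω ^ 2) / 2 := by
    funext ω; ring
  rw [heq]; exact h

private lemma aux_cauchy_schwarz {Ω : Type*} [MeasurableSpace Ω] {μ : Measure Ω}
    {f g : Ω → ℝ} (hf : MemLp f 2 μ) (hg : MemLp g 2 μ) :
    ∫ ω, f ω * g ω ∂μ ≤
      Real.sqrt (∫ ω, f ω ^ 2 ∂μ) * Real.sqrt (∫ ω, g ω ^ 2 ∂μ) := by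
  set F := hf.toLp f with hFdef
  set G := hg.toLp g with hGdef
  have hFG : ∫ ω, f ω * g ω ∂μ = (inner ℝ F G : ℝ) := by
    rw [MeasureTheory.L2.inner_def]
    refine integral_congr_ae ?_
    filter_upwards [hf.coeFn_toLp, hg.coeFn_toLp] with ω h1 h2
    simp [hFdef, hGdef, h1, h2, RCLike.inner_apply, mul_comm]
  have hFn : Real.sqrt (∫ ω, f ω ^ 2 ∂μ) = ‖F‖ := by
    have h1 : (inner ℝ F F : ℝ) = ∫ ω, f ω ^ 2 ∂μ := by
      rw [MeasureTheory.L2.inner_def]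
      refine integral_congr_ae ?_
      filter_upwards [hf.coeFn_toLp] with ω h1
      simp [hFdef, h1, RCLike.inner_apply, sq]
    rw [← h1, real_inner_self_eq_norm_sq, Real.sqrt_sq (norm_nonneg _)]
  have hGn : Real.sqrt (∫ ω, g ω ^ 2 ∂μ) = ‖G‖ := by
    have h1 : (inner ℝ G G : ℝ) = ∫ ω, g ω ^ 2 ∂μ := by
      rw [MeasureTheory.L2.inner_def]
      refine integral_congr_ae ?_
      filter_upwards [hg.coeFn_toLp] with ω h1
      simp [hGdef, h1, RCLike.inner_apply, sq]
    rw [← h1, real_inner_self_eq_norm_sq, Real.sqrt_sq (norm_nonneg _)]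
  rw [hFG, hFn, hGn]
  exact real_inner_le_norm F G

/-- Dual representation of the mean-deviation risk measure of order 2:
`E_μ[Z] + λ(Var_μ Z)^{1/2}
  = sup { E_μ[ξZ] : ξ ∈ L²(μ), E_μ[ξ] = 1, E_μ[(ξ − 1)²] ≤ λ² }`,
i.e. the supremum of reweighted expectations over the χ²-ball of radius `λ²`. -/
theorem mean_deviation_dual_representation
    {Ω : Type*} [MeasurableSpace Ω] (μ : Measure Ω) [IsProbabilityMeasure μ]
    (Z : Ω → ℝ) (hZ : MemLp Z 2 μ) (lam : ℝ) (hlam : 0 ≤ lam) :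
    (∫ ω, Z ω ∂μ) + lam * Real.sqrt (∫ ω, (Z ω - ∫ ω', Z ω' ∂μ) ^ 2 ∂μ) =
      sSup {r : ℝ | ∃ ξ : Ω → ℝ, MemLp ξ 2 μ ∧ (∫ ω, ξ ω ∂μ) = 1 ∧
        (∫ ω, (ξ ω - 1) ^ 2 ∂μ) ≤ lam ^ 2 ∧ r = ∫ ω, ξ ω * Z ω ∂μ} := by
  set m := ∫ ω, Z ω ∂μ with hm
  set f : Ω → ℝ := fun ω => Z ω - m with hfdef
  have hf : MemLp f 2 μ := hZ.sub (memLp_const m)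
  have hZint : Integrable Z μ := hZ.integrable one_le_two
  have hfint : Integrable f μ := hZint.sub (integrable_const m)
  have hf0 : ∫ ω, f ω ∂μ = 0 := by
    simp only [hfdef]
    rw [integral_sub hZint (integrable_const m)]
    simp [hm]
  set σ2 := ∫ ω, f ω ^ 2 ∂μ with hσ2
  have hσ2_nonneg : 0 ≤ σ2 := integral_nonneg fun ω => sq_nonneg _
  set σ := Real.sqrt σ2 with hσ
  have hσ_nonneg : 0 ≤ σ := Real.sqrt_nonneg _
  have hσsq : σ ^ 2 = σ2 := Real.sq_sqrt hσ2_nonneg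
  -- integral of f * Z equals σ2
  have hfZ : ∫ ω, f ω * Z ω ∂μ = σ2 := by
    have heq : (fun ω => f ω * Z ω) = fun ω => f ω ^ 2 + m * f ω := by
      funext ω; simp only [hfdef]; ring
    rw [heq, integral_add hf.integrable_sq (hfint.const_mul m), integral_const_mul, hf0]
    simp [hσ2]
  set S := {r : ℝ | ∃ ξ : Ω → ℝ, MemLp ξ 2 μ ∧ (∫ ω, ξ ω ∂μ) = 1 ∧
      (∫ ω, (ξ ω - 1) ^ 2 ∂μ) ≤ lam ^ 2 ∧ r = ∫ ω, ξ ω * Z ω ∂μ} with hS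
  -- upper bound
  have hub : ∀ r ∈ S, r ≤ m + lam * σ := by
    rintro r ⟨ξ, hξ, hξ1, hξ2, rfl⟩
    set g : Ω → ℝ := fun ω => ξ ω - 1 with hgdef
    have hg : MemLp g 2 μ := hξ.sub (memLp_const 1)
    have hgint : Integrable g μ := (hξ.integrable one_le_two).sub (integrable_const 1)
    have hg0 : ∫ ω, g ω ∂μ = 0 := by
      simp only [hgdef]
      rw [integral_sub (hξ.integrable one_le_two) (integrable_const 1)]
      simp [hξ1]
    have hsplit : (fun ω => ξ ω * Z ω) = fun ω => g ω * f ω + (m * g ω + Z ω) := by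
      funext ω; simp only [hgdef, hfdef]; ring
    have hI1 : Integrable (fun ω => m * g ω) μ := hgint.const_mul m
    have hI2 : Integrable (fun ω => m * g ω + Z ω) μ := hI1.add hZint
    rw [hsplit, integral_add (aux_integrable_mul hg hf) hI2, integral_add hI1 hZint,
      integral_const_mul, hg0]
    have hcs : ∫ ω, g ω * f ω ∂μ ≤ lam * σ := by
      calc ∫ ω, g ω * f ω ∂μ
          ≤ Real.sqrt (∫ ω, g ω ^ 2 ∂μ) * Real.sqrt (∫ ω, f ω ^ 2 ∂μ) :=
            aux_cauchy_schwarz hg hf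
        _ ≤ lam * σ := by
            refine mul_le_mul ?_ le_rfl (Real.sqrt_nonneg _) hlam
            calc Real.sqrt (∫ ω, g ω ^ 2 ∂μ) ≤ Real.sqrt (lam ^ 2) :=
                  Real.sqrt_le_sqrt hξ2
              _ = lam := Real.sqrt_sq hlam
    linarith
  -- membership of the claimed value
  have hmem : m + lam * σ ∈ S := by
    by_cases hσ0 : σ2 = 0
    · refine ⟨fun _ => 1, memLp_const 1, by simp, by simp [sq_nonneg], ?_⟩
      rw [hσ, hσ0]
      simp [hm]
    · have hσ2_pos : 0 < σ2 := lt_of_le_of_ne hσ2_nonneg (Ne.symm hσ0)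
      have hσ_pos : 0 < σ := Real.sqrt_pos.mpr hσ2_pos
      refine ⟨fun ω => 1 + (lam / σ) * f ω, ?_, ?_, ?_, ?_⟩
      · exact (memLp_const (1:ℝ)).add (hf.const_mul (lam / σ))
      · have hI4 : Integrable (fun ω => (lam / σ) * f ω) μ := hfint.const_mul _
        rw [integral_add (integrable_const 1) hI4, integral_const_mul, hf0]
        simp
      · have heq : (fun ω => (1 + (lam / σ) * f ω - 1) ^ 2)
            = fun ω => (lam / σ) ^ 2 * f ω ^ 2 := by
          funext ω; ring
        rw [heq, integral_const_mul, ← hσ2, div_pow, hσsq,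
          div_mul_cancel₀ _ (ne_of_gt hσ2_pos)]
      · have heq : (fun ω => (1 + (lam / σ) * f ω) * Z ω)
            = fun ω => Z ω + (lam / σ) * (f ω * Z ω) := by
          funext ω; ring
        have hI3 : Integrable (fun ω => (lam / σ) * (f ω * Z ω)) μ :=
          (aux_integrable_mul hf hZ).const_mul _
        rw [heq, integral_add hZint hI3, integral_const_mul, hfZ, ← hm]
        have : lam / σ * σ2 = lam * σ := by
          rw [← hσsq]; field_simp
        rw [this]
  have hne : S.Nonempty := ⟨m + lam * σ, hmem⟩
  have hbdd : BddAbove S := ⟨m + lam * σ, hub⟩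
  exact le_antisymm (le_csSup hbdd hmem) (csSup_le hne hub)
end
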